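/- Let ω > B ≥ 0 be real numbers. Then for every t with 0 < t ≤ 1 one has (cosh(ωt) − cosh(Bt)) / sinh(ωt) ≥ ( (ω² − B²) / (2·ω·cosh ω) ) · t. In particular the coefficient of the long-variable term ‖x‖² + ‖y‖² in the exponent of the LSZ propagator is bounded below, on the parameter slice t ∈ [M^{-2i}, M^{-2(i-1)}] with M > 1 and i ≥ 1, by a positive constant times M^{-2i}. -/

import Mathlib

open Real

/-!
The numerator is bounded below through `cosh a - cosh b = 2 sinh ((a+b)/2) sinh ((a-b)/2)`
and `x ≤ sinh x`, which give `cosh (ωt) - cosh (Bt) ≥ (ω² - B²) t² / 2`; the denominator is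
bounded above by `sinh x ≤ x cosh x` and the monotonicity of `cosh`, which give
`sinh (ωt) ≤ ωt cosh ω` for `t ≤ 1`. On the slice `[M^{-2i}, M^{-2(i-1)}]` one has
`M^{-2i} ≤ t ≤ 1`, so the linear bound in `t` yields the scaled one.
-/

namespace Real

theorem cosh_sub_cosh (a b : ℝ) :
    cosh a - cosh b = 2 * sinh ((a + b) / 2) * sinh ((a - b) / 2) := by
  obtain ⟨u, v, rfl, rfl⟩ : ∃ u v, a = u + v ∧ b = u - v :=
    ⟨(a + b) / 2, (a - b) / 2, by ring, by ring⟩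
  rw [show (u + v + (u - v)) / 2 = u by ring, show (u + v - (u - v)) / 2 = v by ring,
    cosh_add, cosh_sub]
  ring

theorem sq_sub_sq_div_two_le_cosh_sub_cosh {a b : ℝ} (hab : |b| ≤ a) :
    (a ^ 2 - b ^ 2) / 2 ≤ cosh a - cosh b := by
  obtain ⟨hsum, hdiff⟩ : 0 ≤ (a + b) / 2 ∧ 0 ≤ (a - b) / 2 := by
    constructor <;> linarith [neg_abs_le b, le_abs_self b]
  have hprod := mul_le_mul (self_le_sinh_iff.2 hsum) (self_le_sinh_iff.2 hdiff) hdiff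
    (hsum.trans (self_le_sinh_iff.2 hsum))
  rw [cosh_sub_cosh]
  nlinarith

theorem sinh_le_mul_cosh {x : ℝ} (hx : 0 ≤ x) : sinh x ≤ x * cosh x := by
  have hderiv : ∀ y, HasDerivAt (fun y => y * cosh y - sinh y) (y * sinh y) y := fun y =>
    (((hasDerivAt_id' y).fun_mul (hasDerivAt_cosh y)).fun_sub (hasDerivAt_sinh y)).congr_deriv
      (by ring)
  have hmono : MonotoneOn (fun y => y * cosh y - sinh y) (Set.Ici 0) :=
    monotoneOn_of_hasDerivWithinAt_nonneg (convex_Ici 0) (by fun_prop)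
      (fun y _ => (hderiv y).hasDerivWithinAt) fun y hy =>
        have hy : 0 ≤ y := interior_subset hy
        mul_nonneg hy (sinh_nonneg_iff.2 hy)
  simpa using hmono Set.self_mem_Ici hx hx

end Real

theorem mul_le_cosh_sub_cosh_div_sinh {ω B t : ℝ} (hω : 0 < ω) (hB : |B| ≤ ω) (ht : 0 < t)
    (ht1 : t ≤ 1) :
    (ω ^ 2 - B ^ 2) / (2 * ω * cosh ω) * t ≤
      (cosh (ω * t) - cosh (B * t)) / sinh (ω * t) := by
  have hωt : 0 < ω * t := mul_pos hω ht
  have hden : sinh (ω * t) ≤ ω * t * cosh ω :=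
    (sinh_le_mul_cosh hωt.le).trans <| mul_le_mul_of_nonneg_left (cosh_le_cosh.2 <| by
      rw [abs_of_pos hωt, abs_of_pos hω]; exact mul_le_of_le_one_right hω.le ht1) hωt.le
  have hnum : ((ω * t) ^ 2 - (B * t) ^ 2) / 2 ≤ cosh (ω * t) - cosh (B * t) :=
    sq_sub_sq_div_two_le_cosh_sub_cosh <| by
      rw [abs_mul, abs_of_pos ht]; exact mul_le_mul_of_nonneg_right hB ht.le
  have hcoeff : 0 ≤ (ω ^ 2 - B ^ 2) / (2 * ω * cosh ω) * t := by
    have : B ^ 2 ≤ ω ^ 2 := sq_le_sq.2 (by rwa [abs_of_pos hω])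
    have := cosh_pos ω
    positivity
  rw [le_div_iff₀ (sinh_pos_iff.2 hωt)]
  calc (ω ^ 2 - B ^ 2) / (2 * ω * cosh ω) * t * sinh (ω * t)
      ≤ (ω ^ 2 - B ^ 2) / (2 * ω * cosh ω) * t * (ω * t * cosh ω) :=
        mul_le_mul_of_nonneg_left hden hcoeff
    _ = ((ω * t) ^ 2 - (B * t) ^ 2) / 2 := by field_simp [(cosh_pos ω).ne']
    _ ≤ cosh (ω * t) - cosh (B * t) := hnum

/-- Small-parameter lower bound on the long-variable coefficient of the LSZ
propagator: for `ω > B ≥ 0` and `0 < t ≤ 1`,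
`(cosh ωt − cosh Bt)/sinh ωt ≥ ((ω² − B²)/(2ω cosh ω))·t`; in particular on the
slice `t ∈ [M^{−2i}, M^{−2(i−1)}]` it is bounded below by a positive constant
times `M^{−2i}`. -/
theorem lsz_long_variable_coefficient_bound (ω B : ℝ) (hB : 0 ≤ B) (hωB : B < ω) :
    (∀ t : ℝ, 0 < t → t ≤ 1 →
      (Real.cosh (ω * t) - Real.cosh (B * t)) / Real.sinh (ω * t) ≥
        ((ω ^ 2 - B ^ 2) / (2 * ω * Real.cosh ω)) * t) ∧
    (∀ M : ℝ, 1 < M → ∃ C : ℝ, 0 < C ∧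
      ∀ i : ℕ, 1 ≤ i →
        ∀ t ∈ Set.Icc (M ^ (-2 * (i : ℝ))) (M ^ (-2 * ((i : ℝ) - 1))),
          (Real.cosh (ω * t) - Real.cosh (B * t)) / Real.sinh (ω * t) ≥
            C * M ^ (-2 * (i : ℝ))) := by
  have hω : 0 < ω := hB.trans_lt hωB
  have hbound : ∀ t : ℝ, 0 < t → t ≤ 1 →
      (ω ^ 2 - B ^ 2) / (2 * ω * cosh ω) * t ≤
        (cosh (ω * t) - cosh (B * t)) / sinh (ω * t) :=
    fun t => mul_le_cosh_sub_cosh_div_sinh hω (by rw [abs_of_nonneg hB]; exact hωB.le)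
  have hC : 0 < (ω ^ 2 - B ^ 2) / (2 * ω * cosh ω) := by
    have := cosh_pos ω
    have : B ^ 2 < ω ^ 2 := by nlinarith
    exact div_pos (by linarith) (by positivity)
  refine ⟨hbound, fun M hM => ⟨_, hC, fun i hi t ht => ?_⟩⟩
  have ht0 : 0 < t := (rpow_pos_of_pos (by linarith) _).trans_le ht.1
  have ht1 : t ≤ 1 := ht.2.trans <| rpow_le_one_of_one_le_of_nonpos hM.le <| by
    have : (1 : ℝ) ≤ i := by exact_mod_cast hi
    linarith
  exact (mul_le_mul_of_nonneg_left ht.1 hC.le).trans (hbound t ht0 ht1)
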